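/- Let α, β ≥ 1 and let A be any 2×2 matrix with strictly positive entries and R(A) = α. Then there exists a 2×2 matrix B with strictly positive entries, R(B) = β, and R(AB) = Φ(α,β). -/

import Mathlib

/-!
Write `R M = max (cr M) (cr M)⁻¹` with `cr M = m₀₀ m₁₁ / (m₀₁ m₁₀)`, and put `s = √α`, `t = √β`.
The cross ratio is invariant under scaling rows, and a positive matrix with `cr A = s²` is
obtained from `[[s, 1], [1, s]]` by scaling rows and columns: `A = D₁ [[s, 1], [1, s]] D₂`.
Then `B = D₂⁻¹ [[t, 1], [1, t]]` has `cr B = t²`, while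
`A B = D₁ [[s, 1], [1, s]] [[t, 1], [1, t]] = D₁ [[1 + st, s + t], [s + t, 1 + st]]`
has cross ratio `((1 + st) / (s + t))² ≥ 1`.
If instead `cr A = s⁻²`, swap the columns of `A` and the rows of `B`: this inverts both cross
ratios and leaves `A B` unchanged.
-/

open Matrix

theorem max_self_inv_eq_iff {K : Type*} [Field K] [LinearOrder K] [IsStrictOrderedRing K]
    {x a : K} (ha : 1 ≤ a) : max x x⁻¹ = a ↔ x = a ∨ x = a⁻¹ := by
  have ha' : a⁻¹ ≤ a := (inv_le_one_of_one_le₀ ha).trans ha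
  constructor
  · intro h
    rcases max_choice x x⁻¹ with hx | hx <;> rw [hx] at h
    · exact Or.inl h
    · exact Or.inr (by rw [← h, inv_inv])
  · rintro (rfl | rfl)
    · exact max_eq_left ha'
    · rw [inv_inv, max_eq_right ha']

theorem one_le_one_add_mul_div_add {K : Type*} [Field K] [LinearOrder K] [IsStrictOrderedRing K]
    {s t : K} (hs : 1 ≤ s) (ht : 1 ≤ t) : 1 ≤ (1 + s * t) / (s + t) := by
  rw [one_le_div (by linarith)]
  nlinarith

namespace Matrix

noncomputable def crossRatio (M : Matrix (Fin 2) (Fin 2) ℝ) : ℝ := M 0 0 * M 1 1 / (M 0 1 * M 1 0)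

def canonicalForm (t : ℝ) : Matrix (Fin 2) (Fin 2) ℝ := !![t, 1; 1, t]

theorem crossRatio_diagonal_mul (u : Fin 2 → ℝ) (hu : ∀ i, u i ≠ 0)
    (M : Matrix (Fin 2) (Fin 2) ℝ) : crossRatio (diagonal u * M) = crossRatio M := by
  simp only [crossRatio, diagonal_mul]
  conv_rhs => rw [← mul_div_mul_left _ _ (mul_ne_zero (hu 0) (hu 1))]
  ring

theorem crossRatio_submatrix_swap_id (M : Matrix (Fin 2) (Fin 2) ℝ) :
    crossRatio (M.submatrix (Equiv.swap 0 1) id) = (crossRatio M)⁻¹ := by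
  simp [crossRatio, mul_comm]

theorem crossRatio_submatrix_id_swap (M : Matrix (Fin 2) (Fin 2) ℝ) :
    crossRatio (M.submatrix id (Equiv.swap 0 1)) = (crossRatio M)⁻¹ := by
  simp [crossRatio]

theorem crossRatio_canonicalForm (t : ℝ) : crossRatio (canonicalForm t) = t ^ 2 := by
  simp [crossRatio, canonicalForm, sq]

theorem crossRatio_canonicalForm_mul_canonicalForm (s t : ℝ) :
    crossRatio (canonicalForm s * canonicalForm t) = ((1 + s * t) / (s + t)) ^ 2 := by
  simp [crossRatio, canonicalForm, Matrix.mul_apply, Fin.sum_univ_two, div_pow]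
  ring

theorem canonicalForm_pos {t : ℝ} (ht : 0 < t) (i j : Fin 2) : 0 < canonicalForm t i j := by
  fin_cases i <;> fin_cases j <;> simp [canonicalForm, ht]

theorem exists_eq_diagonal_mul_canonicalForm_mul_diagonal {A : Matrix (Fin 2) (Fin 2) ℝ}
    (hA : ∀ i j, 0 < A i j) {t : ℝ} (ht : 0 < t) (hcr : crossRatio A = t ^ 2) :
    ∃ u v : Fin 2 → ℝ, (∀ i, 0 < u i) ∧ (∀ i, 0 < v i) ∧
      A = diagonal u * canonicalForm t * diagonal v := by
  have h00 := hA 0 0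
  have h01 := hA 0 1
  have h10 := hA 1 0
  have h11 : A 1 1 = t ^ 2 * A 0 1 * A 1 0 / A 0 0 := by
    rw [crossRatio, div_eq_iff (by positivity)] at hcr
    field_simp
    linarith
  refine ⟨![1, A 1 0 * t / A 0 0], ![A 0 0 / t, A 0 1], ?_, ?_, ?_⟩
  · intro i; fin_cases i <;> simp [h10, h00, ht]
  · intro i; fin_cases i <;> simp [h00, h01, ht]
  · ext i j
    fin_cases i <;> fin_cases j <;> simp [canonicalForm, h11] <;> field_simp

theorem exists_pos_crossRatio_eq_sq_and_crossRatio_mul_eq {A : Matrix (Fin 2) (Fin 2) ℝ}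
    (hA : ∀ i j, 0 < A i j) {s t : ℝ} (hs : 0 < s) (ht : 0 < t) (hcr : crossRatio A = s ^ 2) :
    ∃ B : Matrix (Fin 2) (Fin 2) ℝ, (∀ i j, 0 < B i j) ∧ crossRatio B = t ^ 2 ∧
      crossRatio (A * B) = ((1 + s * t) / (s + t)) ^ 2 := by
  obtain ⟨u, v, hu, hv, rfl⟩ := exists_eq_diagonal_mul_canonicalForm_mul_diagonal hA hs hcr
  have hvv : diagonal v * diagonal v⁻¹ = 1 := by
    rw [diagonal_mul_diagonal, ← diagonal_one]
    exact congrArg diagonal (funext fun i => mul_inv_cancel₀ (hv i).ne')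
  refine ⟨diagonal v⁻¹ * canonicalForm t, fun i j => ?_, ?_, ?_⟩
  · rw [diagonal_mul]
    exact mul_pos (inv_pos.2 (hv i)) (canonicalForm_pos ht i j)
  · rw [crossRatio_diagonal_mul v⁻¹ (fun i => (inv_pos.2 (hv i)).ne'), crossRatio_canonicalForm]
  · calc crossRatio (diagonal u * canonicalForm s * diagonal v * (diagonal v⁻¹ * canonicalForm t))
        = crossRatio (diagonal u * (canonicalForm s * canonicalForm t)) := by
          simp only [Matrix.mul_assoc, ← Matrix.mul_assoc (diagonal v), hvv, Matrix.one_mul]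
      _ = ((1 + s * t) / (s + t)) ^ 2 := by
          rw [crossRatio_diagonal_mul _ (fun i => (hu i).ne'),
            crossRatio_canonicalForm_mul_canonicalForm]

theorem exists_pos_crossRatio_mul_eq {A : Matrix (Fin 2) (Fin 2) ℝ} (hA : ∀ i j, 0 < A i j)
    {s t : ℝ} (hs : 0 < s) (ht : 0 < t) (hcr : crossRatio A = s ^ 2 ∨ crossRatio A = (s ^ 2)⁻¹) :
    ∃ B : Matrix (Fin 2) (Fin 2) ℝ, (∀ i j, 0 < B i j) ∧
      (crossRatio B = t ^ 2 ∨ crossRatio B = (t ^ 2)⁻¹) ∧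
      crossRatio (A * B) = ((1 + s * t) / (s + t)) ^ 2 := by
  rcases hcr with hcr | hcr
  · obtain ⟨B, hB, hcrB, hAB⟩ := exists_pos_crossRatio_eq_sq_and_crossRatio_mul_eq hA hs ht hcr
    exact ⟨B, hB, Or.inl hcrB, hAB⟩
  · set σ := Equiv.swap (0 : Fin 2) 1
    obtain ⟨B, hB, hcrB, hAB⟩ := exists_pos_crossRatio_eq_sq_and_crossRatio_mul_eq
      (A := A.submatrix id σ) (fun i j => hA _ _) hs ht
      (by rw [crossRatio_submatrix_id_swap, hcr, inv_inv])
    refine ⟨B.submatrix σ id, fun i j => hB _ _,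
      Or.inr (by rw [crossRatio_submatrix_swap_id, hcrB]), ?_⟩
    calc crossRatio (A * B.submatrix σ id)
        = crossRatio ((A.submatrix id σ).submatrix id σ * B.submatrix σ id) := by
          rw [submatrix_submatrix, Function.id_comp, ← Equiv.Perm.coe_mul, Equiv.swap_mul_self,
            Equiv.Perm.coe_one, submatrix_id_id]
      _ = _ := by rw [submatrix_mul_equiv, submatrix_id_id, hAB]

end Matrix

theorem stmt8 (R : Matrix (Fin 2) (Fin 2) ℝ → ℝ)
    (hR : ∀ M, R M = max (M 0 0 * M 1 1 / (M 0 1 * M 1 0))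
                        (M 0 1 * M 1 0 / (M 0 0 * M 1 1)))
    (α β : ℝ) (hα : 1 ≤ α) (hβ : 1 ≤ β)
    (A : Matrix (Fin 2) (Fin 2) ℝ) (hA : ∀ i j, 0 < A i j) (hRA : R A = α) :
    ∃ B : Matrix (Fin 2) (Fin 2) ℝ, (∀ i j, 0 < B i j) ∧ R B = β ∧
      R (A * B) = ((1 + Real.sqrt (α * β)) / (Real.sqrt α + Real.sqrt β)) ^ 2 := by
  have hR' : ∀ M, R M = max (crossRatio M) (crossRatio M)⁻¹ := fun M => by
    rw [hR, crossRatio, inv_div]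
  have hs : 1 ≤ √α := Real.one_le_sqrt.2 hα
  have ht : 1 ≤ √β := Real.one_le_sqrt.2 hβ
  rw [hR', max_self_inv_eq_iff hα, ← Real.sq_sqrt (zero_le_one.trans hα)] at hRA
  obtain ⟨B, hB, hcrB, hAB⟩ :=
    exists_pos_crossRatio_mul_eq (t := √β) hA (by positivity) (by positivity) hRA
  rw [Real.sq_sqrt (zero_le_one.trans hβ)] at hcrB
  refine ⟨B, hB, by rwa [hR', max_self_inv_eq_iff hβ], ?_⟩
  rw [hR', Real.sqrt_mul (zero_le_one.trans hα), max_self_inv_eq_iff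
    (one_le_pow₀ (one_le_one_add_mul_div_add hs ht))]
  exact Or.inl hAB
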